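/- Let n ≥ 2 and let μ be any probability distribution on the simple graphs with vertex set {1,...,n} (no independence assumption required). If every unordered pair e of distinct vertices has marginal probability Pr[X_e] > 1 − 2/n of being an edge, then a graph sampled from μ is connected with positive probability; equivalently, the support of μ contains a connected graph. -/

import Mathlib

open scoped Classical

noncomputable def pr {n : ℕ} (μ : SimpleGraph (Fin n) → ℝ) (P : SimpleGraph (Fin n) → Prop) : ℝ :=
  ∑ G : SimpleGraph (Fin n), if P G then μ G else 0

def IsDist {n : ℕ} (μ : SimpleGraph (Fin n) → ℝ) : Prop :=
  (∀ G, 0 ≤ μ G) ∧ ∑ G : SimpleGraph (Fin n), μ G = 1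

/-!
If `G` is disconnected, some component `S` leaves all `|S| (n - |S|) ≥ n - 1` pairs across the
cut as non-edges. Each pair is a non-edge with probability `< 2 / n`, so by linearity the expected
number of non-edges is `< (n choose 2) · 2 / n = n - 1`. Markov's inequality then gives
`Pr[G disconnected] · (n - 1) < n - 1`, i.e. `Pr[G disconnected] < 1`.
-/

open Finset SimpleGraph

lemma SimpleGraph.card_sub_one_le_card_compl_edgeFinset {V : Type*} [Fintype V] [DecidableEq V]
    {G : SimpleGraph V} (hG : ¬ G.Preconnected) :
    Fintype.card V - 1 ≤ #Gᶜ.edgeFinset := by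
  obtain ⟨u, v, huv⟩ : ∃ u v, ¬ G.Reachable u v := by simpa [Preconnected] using hG
  set S : Finset V := {w | G.Reachable u w}
  have hu : u ∈ S := by simp [S]
  have hv : v ∈ Sᶜ := by simp [S, huv]
  have hcut : #(S ×ˢ Sᶜ) ≤ #Gᶜ.edgeFinset := by
    refine card_le_card_of_injOn (fun p => s(p.1, p.2)) ?_ ?_
    · rintro ⟨a, b⟩ hab
      simp only [coe_product, Set.mem_prod, mem_coe, mem_compl, S, mem_filter, mem_univ,
        true_and] at hab
      simp only [mem_coe, mem_edgeFinset, mem_edgeSet, compl_adj]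
      exact ⟨fun h => hab.2 (h ▸ hab.1), fun h => hab.2 (hab.1.trans h.reachable)⟩
    · rintro ⟨a, b⟩ hab ⟨a', b'⟩ hab' h
      simp only [coe_product, Set.mem_prod, mem_coe, mem_compl] at hab hab'
      rcases Sym2.eq_iff.mp h with ⟨rfl, rfl⟩ | ⟨rfl, rfl⟩
      · rfl
      · exact absurd hab.1 hab'.2
  have hk : 1 ≤ #S := card_pos.mpr ⟨u, hu⟩
  have hl : 1 ≤ #Sᶜ := card_pos.mpr ⟨v, hv⟩
  have hprod : #S + #Sᶜ ≤ #S * #Sᶜ + 1 := by nlinarith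
  have hsum : #S + #Sᶜ = Fintype.card V := card_add_card_compl S
  rw [card_product] at hcut
  omega

lemma SimpleGraph.filter_top_edgeFinset_not_mem_edgeSet {V : Type*} [Fintype V] [DecidableEq V]
    (G : SimpleGraph V) :
    {e ∈ (⊤ : SimpleGraph V).edgeFinset | e ∉ G.edgeSet} = Gᶜ.edgeFinset := by
  ext e
  induction e with
  | h a b => simp [compl_adj]

section Probability

variable {n : ℕ} {μ : SimpleGraph (Fin n) → ℝ}

lemma pr_not (hμ : IsDist μ) (P : SimpleGraph (Fin n) → Prop) :
    pr μ (fun G => ¬ P G) = 1 - pr μ P := by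
  rw [← hμ.2, pr, pr, eq_sub_iff_add_eq, ← sum_add_distrib]
  exact sum_congr rfl fun G _ => by by_cases h : P G <;> simp [h]

lemma sum_mul_card_filter_eq_sum_pr {ι : Type*} (s : Finset ι)
    (A : ι → SimpleGraph (Fin n) → Prop) [∀ i G, Decidable (A i G)] :
    ∑ G, μ G * #{i ∈ s | A i G} = ∑ i ∈ s, pr μ (A i) := by
  simp only [card_filter, Nat.cast_sum, Nat.cast_ite, Nat.cast_one, Nat.cast_zero, mul_sum,
    mul_ite, mul_one, mul_zero, pr]
  rw [sum_comm]
  congr! 3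

lemma pr_mul_le_sum_pr {ι : Type*} (hμ : ∀ G, 0 ≤ μ G) {P : SimpleGraph (Fin n) → Prop}
    (s : Finset ι) (A : ι → SimpleGraph (Fin n) → Prop) [∀ i G, Decidable (A i G)] {c : ℝ}
    (hc : ∀ G, P G → c ≤ #{i ∈ s | A i G}) :
    pr μ P * c ≤ ∑ i ∈ s, pr μ (A i) := by
  rw [← sum_mul_card_filter_eq_sum_pr, pr, sum_mul]
  refine sum_le_sum fun G _ => ?_
  split_ifs with hP
  · exact mul_le_mul_of_nonneg_left (hc G hP) (hμ G)
  · rw [zero_mul]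
    exact mul_nonneg (hμ G) (Nat.cast_nonneg _)

end Probability

lemma sum_pr_not_mem_edgeSet_lt {n : ℕ} (hn : 2 ≤ n) {μ : SimpleGraph (Fin n) → ℝ}
    (hμ : IsDist μ)
    (hmarg : ∀ u v : Fin n, u ≠ v → 1 - 2 / (n : ℝ) < pr μ (fun G => G.Adj u v)) :
    ∑ e ∈ (⊤ : SimpleGraph (Fin n)).edgeFinset, pr μ (fun G => e ∉ G.edgeSet) < n - 1 := by
  have hedge : ∀ e ∈ (⊤ : SimpleGraph (Fin n)).edgeFinset,
      pr μ (fun G => e ∉ G.edgeSet) < 2 / n := by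
    intro e he
    induction e with
    | h u v =>
      have huv : u ≠ v := by simpa using he
      simp only [mem_edgeSet]
      linarith [pr_not hμ (fun G => G.Adj u v), hmarg u v huv]
  have hne : (⊤ : SimpleGraph (Fin n)).edgeFinset.Nonempty :=
    ⟨s(⟨0, by omega⟩, ⟨1, by omega⟩), by simp⟩
  have hn0 : (n : ℝ) ≠ 0 := by positivity
  calc _ < ∑ _ ∈ (⊤ : SimpleGraph (Fin n)).edgeFinset, 2 / (n : ℝ) :=
        sum_lt_sum_of_nonempty hne hedge
    _ = n - 1 := by
      rw [sum_const, card_edgeFinset_top_eq_card_choose_two, Fintype.card_fin, nsmul_eq_mul,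
        Nat.cast_choose_two]
      field_simp

theorem connected_of_high_marginals (n : ℕ) (hn : 2 ≤ n)
    (μ : SimpleGraph (Fin n) → ℝ) (hμ : IsDist μ)
    (hmarg : ∀ u v : Fin n, u ≠ v → 1 - 2 / (n : ℝ) < pr μ (fun G => G.Adj u v)) :
    0 < pr μ (fun G => G.Connected) := by
  have : Nonempty (Fin n) := ⟨⟨0, by omega⟩⟩
  have hdisconnected : ∀ G : SimpleGraph (Fin n), ¬ G.Connected →
      (n : ℝ) - 1 ≤ #{e ∈ (⊤ : SimpleGraph (Fin n)).edgeFinset | e ∉ G.edgeSet} := by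
    intro G hG
    have hpre : ¬ G.Preconnected := fun h => hG ⟨h⟩
    rw [G.filter_top_edgeFinset_not_mem_edgeSet]
    have hcard := card_sub_one_le_card_compl_edgeFinset hpre
    rw [Fintype.card_fin] at hcard
    have h1 : 1 ≤ n := by omega
    exact_mod_cast hcard
  have hmarkov := pr_mul_le_sum_pr hμ.1 (⊤ : SimpleGraph (Fin n)).edgeFinset
    (fun e G => e ∉ G.edgeSet) hdisconnected
  have hsum := sum_pr_not_mem_edgeSet_lt hn hμ hmarg
  have hn1 : (0 : ℝ) < n - 1 := by
    have : (2 : ℝ) ≤ n := by exact_mod_cast hn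
    linarith
  have hlt : pr μ (fun G => ¬ G.Connected) < 1 :=
    (mul_lt_iff_lt_one_left hn1).mp (hmarkov.trans_lt hsum)
  linarith [pr_not hμ (fun G => G.Connected)]
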